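/- arXiv:1211.4022 — 3 statements merged into one kernel-verified Lean document; each statement's English description precedes it below -/
import Mathlib

section
/- Let ρ be a bipartite state on ℂ^m ⊗ ℂ^n and let ρ̃ = Σ_{i,j,k,l} ρ_{(i,k),(j,l)} (E_{ij} ⊗ E_{kl}) ⊗ (E_{ij} ⊗ E_{kl}) be its two-sided pre-measurement state on (ℂ^m ⊗ ℂ^n) ⊗ (ℂ^m ⊗ ℂ^n). Then the negativity of ρ̃ across the indicated bipartite cut equals (‖ρ‖_{l1} − 1)/2, where ‖ρ‖_{l1} is the entrywise l1-norm of ρ in the computational product basis. Consequently, the two-sided negativity of quantumness, defined as the infimum over m×m unitaries U and n×n unitaries V of the negativity of the two-sided pre-measurement state of (U ⊗ V)† ρ (U ⊗ V), equals inf_{U,V} (‖(U ⊗ V)† ρ (U ⊗ V)‖_{l1} − 1)/2. -/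
open scoped Kronecker ComplexOrder
open Matrix

noncomputable def traceNorm {ι : Type*} [Fintype ι] [DecidableEq ι] (A : Matrix ι ι ℂ) : ℝ :=
  (((Matrix.posSemidef_conjTranspose_mul_self A).1.eigenvectorUnitary : Matrix ι ι ℂ) *
    Matrix.diagonal (((↑) : ℝ → ℂ) ∘ Real.sqrt ∘ (Matrix.posSemidef_conjTranspose_mul_self A).1.eigenvalues) *
    (star (Matrix.posSemidef_conjTranspose_mul_self A).1.eigenvectorUnitary : Matrix ι ι ℂ)).trace.re

noncomputable def l1Norm {ι κ : Type*} [Fintype ι] [Fintype κ] (A : Matrix ι κ ℂ) : ℝ :=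
  ∑ i, ∑ j, ‖A i j‖

def ptranspose {α β : Type*} (ρ : Matrix (α × β) (α × β) ℂ) : Matrix (α × β) (α × β) ℂ :=
  Matrix.of fun p q => ρ (p.1, q.2) (q.1, p.2)

noncomputable def negativity {α β : Type*} [Fintype α] [Fintype β] [DecidableEq α] [DecidableEq β]
    (ρ : Matrix (α × β) (α × β) ℂ) : ℝ :=
  (traceNorm (ptranspose ρ) - 1) / 2

def matUnit {ι : Type*} [DecidableEq ι] (i j : ι) : Matrix ι ι ℂ :=
  Matrix.single i j 1

noncomputable def mcs {n : ℕ} (t : Fin n → Fin n → ℂ) :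
    Matrix (Fin n × Fin n) (Fin n × Fin n) ℂ :=
  ∑ i, ∑ j, t i j • (matUnit i j ⊗ₖ matUnit i j)

def blockOf {m n : ℕ} (ρ : Matrix (Fin m × Fin n) (Fin m × Fin n) ℂ) (i j : Fin m) :
    Matrix (Fin n) (Fin n) ℂ :=
  Matrix.of fun k l => ρ (i, k) (j, l)

noncomputable def conjU {m n : ℕ} (U : Matrix.unitaryGroup (Fin m) ℂ)
    (ρ : Matrix (Fin m × Fin n) (Fin m × Fin n) ℂ) : Matrix (Fin m × Fin n) (Fin m × Fin n) ℂ :=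
  ((U : Matrix (Fin m) (Fin m) ℂ) ⊗ₖ (1 : Matrix (Fin n) (Fin n) ℂ))ᴴ * ρ *
    ((U : Matrix (Fin m) (Fin m) ℂ) ⊗ₖ (1 : Matrix (Fin n) (Fin n) ℂ))

noncomputable def conjUV {m n : ℕ} (U : Matrix.unitaryGroup (Fin m) ℂ)
    (V : Matrix.unitaryGroup (Fin n) ℂ)
    (ρ : Matrix (Fin m × Fin n) (Fin m × Fin n) ℂ) : Matrix (Fin m × Fin n) (Fin m × Fin n) ℂ :=
  ((U : Matrix (Fin m) (Fin m) ℂ) ⊗ₖ (V : Matrix (Fin n) (Fin n) ℂ))ᴴ * ρ *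
    ((U : Matrix (Fin m) (Fin m) ℂ) ⊗ₖ (V : Matrix (Fin n) (Fin n) ℂ))

noncomputable def QNA {m n : ℕ} (ρ : Matrix (Fin m × Fin n) (Fin m × Fin n) ℂ) : ℝ :=
  ⨅ U : Matrix.unitaryGroup (Fin m) ℂ,
    ((∑ i, ∑ j, traceNorm (blockOf (conjU U ρ) i j)) - 1) / 2

noncomputable def QNAB {m n : ℕ} (ρ : Matrix (Fin m × Fin n) (Fin m × Fin n) ℂ) : ℝ :=
  ⨅ U : Matrix.unitaryGroup (Fin m) ℂ, ⨅ V : Matrix.unitaryGroup (Fin n) ℂ,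
    (l1Norm (conjUV U V ρ) - 1) / 2

/-- The two-sided pre-measurement state
`ρ̃ = Σ_{i,j,k,l} ρ_{(i,k),(j,l)} (E_{ij} ⊗ E_{kl}) ⊗ (E_{ij} ⊗ E_{kl})`. -/
noncomputable def premeas2 {m n : ℕ} (ρ : Matrix (Fin m × Fin n) (Fin m × Fin n) ℂ) :
    Matrix ((Fin m × Fin n) × (Fin m × Fin n)) ((Fin m × Fin n) × (Fin m × Fin n)) ℂ :=
  ∑ i, ∑ j, ∑ k, ∑ l, ρ (i, k) (j, l) •
    ((matUnit i j ⊗ₖ matUnit k l) ⊗ₖ (matUnit i j ⊗ₖ matUnit k l))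

/-!
The partial transpose `M` of `premeas2 ρ` has, in row `(a, b)`, a single possibly nonzero entry
`ρ a b`, in column `(b, a)`: it is a permutation matrix times a diagonal matrix. Hence `Mᴴ * M` is
diagonal with entries `‖ρ a b‖ ^ 2`, its square root is diagonal with entries `‖ρ a b‖`, and the
trace norm is `∑ ‖ρ a b‖ = l1Norm ρ`.
-/

section TraceNorm

variable {ι : Type*} [Fintype ι] [DecidableEq ι]

open scoped MatrixOrder in
lemma traceNorm_eq_trace_sqrt (A : Matrix ι ι ℂ) :
    traceNorm A = (CFC.sqrt (Aᴴ * A)).trace.re := by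
  have hA := Matrix.posSemidef_conjTranspose_mul_self A
  rw [CFC.sqrt_eq_real_sqrt _ hA.nonneg, cfcₙ_eq_cfc (hf0 := Real.sqrt_zero), hA.1.cfc_eq,
    Matrix.IsHermitian.cfc, Unitary.conjStarAlgAut_apply, traceNorm]
  rfl

open scoped MatrixOrder in
lemma traceNorm_eq_trace_of_mul_self_eq {A D : Matrix ι ι ℂ} (hD : D.PosSemidef)
    (h : D * D = Aᴴ * A) : traceNorm A = D.trace.re := by
  rw [traceNorm_eq_trace_sqrt, CFC.sqrt_unique h hD.nonneg]

lemma conjTranspose_mul_self_eq_diagonal_of_support_perm {A : Matrix ι ι ℂ} (σ : ι ≃ ι)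
    (hA : ∀ i j, j ≠ σ i → A i j = 0) :
    Aᴴ * A = Matrix.diagonal fun j => ((‖A (σ.symm j) j‖ ^ 2 : ℝ) : ℂ) := by
  ext j k
  rw [Matrix.mul_apply, Finset.sum_eq_single (σ.symm j)]
  · by_cases hjk : j = k
    · subst hjk
      simp [Complex.sq_norm, Complex.normSq_eq_conj_mul_self]
    · simp [Matrix.diagonal_apply_ne _ hjk, hA (σ.symm j) k (by simpa using Ne.symm hjk)]
  · intro i _ hi
    simp [hA i j (by rintro rfl; simp at hi)]
  · simp

lemma traceNorm_eq_sum_norm_of_support_perm {A : Matrix ι ι ℂ} (σ : ι ≃ ι)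
    (hA : ∀ i j, j ≠ σ i → A i j = 0) :
    traceNorm A = ∑ j, ‖A (σ.symm j) j‖ := by
  have hD : (Matrix.diagonal fun j => (‖A (σ.symm j) j‖ : ℂ)).PosSemidef :=
    Matrix.posSemidef_diagonal_iff.mpr fun j => by positivity
  rw [traceNorm_eq_trace_of_mul_self_eq hD, Matrix.trace_diagonal, Complex.re_sum]
  · simp
  · rw [conjTranspose_mul_self_eq_diagonal_of_support_perm σ hA, Matrix.diagonal_mul_diagonal]
    simp [sq]

end TraceNorm

lemma premeas2_apply {m n : ℕ} (ρ : Matrix (Fin m × Fin n) (Fin m × Fin n) ℂ)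
    (a b c d : Fin m × Fin n) :
    premeas2 ρ (a, b) (c, d) = if a = b ∧ c = d then ρ a c else 0 := by
  have hsingle : premeas2 ρ = ∑ p, ∑ q, Matrix.single (p, p) (q, q) (ρ p q) := by
    simp only [premeas2, matUnit, Matrix.single_kronecker_single, mul_one, Fintype.sum_prod_type,
      Matrix.smul_single, smul_eq_mul]
    exact Finset.sum_congr rfl fun i _ => Finset.sum_comm
  rw [hsingle]
  simp only [Matrix.sum_apply, Matrix.single_apply, Prod.mk.injEq]
  split_ifs with h
  · obtain ⟨rfl, rfl⟩ := h
    simp [ite_and, Finset.sum_ite_eq']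
  · refine Finset.sum_eq_zero fun p _ => Finset.sum_eq_zero fun q _ => if_neg ?_
    rintro ⟨⟨rfl, rfl⟩, rfl, rfl⟩
    exact h ⟨rfl, rfl⟩

lemma traceNorm_ptranspose_premeas2 {m n : ℕ} (ρ : Matrix (Fin m × Fin n) (Fin m × Fin n) ℂ) :
    traceNorm (ptranspose (premeas2 ρ)) = l1Norm ρ := by
  have hsupport : ∀ p q, q ≠ Equiv.prodComm _ _ p → ptranspose (premeas2 ρ) p q = 0 := by
    rintro ⟨a, b⟩ ⟨c, d⟩ hne
    simp only [ptranspose, Matrix.of_apply, premeas2_apply]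
    rw [if_neg]
    rintro ⟨rfl, rfl⟩
    exact hne rfl
  rw [traceNorm_eq_sum_norm_of_support_perm _ hsupport, Fintype.sum_prod_type, l1Norm,
    Finset.sum_comm]
  simp [ptranspose, premeas2_apply]

lemma negativity_premeas2 {m n : ℕ} (ρ : Matrix (Fin m × Fin n) (Fin m × Fin n) ℂ) :
    negativity (premeas2 ρ) = (l1Norm ρ - 1) / 2 := by
  rw [negativity, traceNorm_ptranspose_premeas2]

theorem stmt_2_general {m n : ℕ} (ρ : Matrix (Fin m × Fin n) (Fin m × Fin n) ℂ) :
    negativity (premeas2 ρ) = (l1Norm ρ - 1) / 2 ∧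
    (⨅ U : Matrix.unitaryGroup (Fin m) ℂ, ⨅ V : Matrix.unitaryGroup (Fin n) ℂ,
        negativity (premeas2 (conjUV U V ρ)))
      = ⨅ U : Matrix.unitaryGroup (Fin m) ℂ, ⨅ V : Matrix.unitaryGroup (Fin n) ℂ,
        (l1Norm (conjUV U V ρ) - 1) / 2 :=
  ⟨negativity_premeas2 ρ,
    iInf_congr fun U => iInf_congr fun V => negativity_premeas2 (conjUV U V ρ)⟩

/-- the negativity of the two-sided pre-measurement state equals
`(‖ρ‖_{l1} − 1)/2`, and consequently the two-sided negativity of quantumness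
equals the minimized `(‖(U⊗V)†ρ(U⊗V)‖_{l1} − 1)/2`. -/
theorem stmt_2 {m n : ℕ} (ρ : Matrix (Fin m × Fin n) (Fin m × Fin n) ℂ)
    (hpos : ρ.PosSemidef) (htr : ρ.trace = 1) :
    negativity (premeas2 ρ) = (l1Norm ρ - 1) / 2 ∧
    (⨅ U : Matrix.unitaryGroup (Fin m) ℂ, ⨅ V : Matrix.unitaryGroup (Fin n) ℂ,
        negativity (premeas2 (conjUV U V ρ)))
      = ⨅ U : Matrix.unitaryGroup (Fin m) ℂ, ⨅ V : Matrix.unitaryGroup (Fin n) ℂ,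
        (l1Norm (conjUV U V ρ) - 1) / 2 :=
  stmt_2_general ρ
end

section
/- For every bipartite state ρ on ℂ^m ⊗ ℂ^n and all unitaries U (m×m) and V (n×n), the negativity satisfies N(ρ) ≤ (1/2)‖σ − Δ(σ)‖_{l1}, where σ = (U ⊗ V)† ρ (U ⊗ V) and Δ(σ) is the diagonal part of σ in the computational product basis. In particular N(ρ) ≤ inf_{U,V} (1/2)‖σ − Δ(σ)‖_{l1}, proving the conjecture of Khasin, Kosloff and Steinitz. -/
open scoped Kronecker ComplexOrder
open Matrix

/-- The diagonal part of a matrix: diagonal entries kept, off-diagonal entries set to 0. -/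
def diagPart {ι : Type*} [DecidableEq ι] (A : Matrix ι ι ℂ) : Matrix ι ι ℂ :=
  Matrix.of fun p q => if p = q then A p q else 0


/-!
The partial transpose of `σ = (U ⊗ V)† ρ (U ⊗ V)` is `(U† ⊗ Vᵀ) ρ^Γ (U ⊗ V̄)`, a two-sided unitary
multiple of `ρ^Γ`, so `σ` and `ρ` have the same negativity. The trace norm is dominated by the
entrywise l1-norm: by polar decomposition `|A| = W† A` for a partial isometry `W`, whose entries
have modulus at most `1`, hence `‖A‖₁ = Re Tr (W† A) ≤ ∑ |A i j|`. The partial transpose merely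
permutes entries, so `‖σ^Γ‖₁ ≤ ‖σ‖_{l1}`, and the diagonal of the state `σ` is nonnegative with
sum `1`, so `‖σ‖_{l1} = 1 + ‖σ - Δ(σ)‖_{l1}`.
-/

section Entrywise

variable {ι κ : Type*} [Fintype ι]

open MatrixOrder in
lemma norm_apply_le_one_of_conjTranspose_mul_self_le_one [DecidableEq κ] {W : Matrix ι κ ℂ}
    (hW : Wᴴ * W ≤ 1) (i : ι) (j : κ) : ‖W i j‖ ≤ 1 := by
  have hdiag : (Wᴴ * W) j j = ((∑ k, ‖W k j‖ ^ 2 : ℝ) : ℂ) := by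
    simp [mul_apply, Complex.conj_mul']
  have hcol : ∑ k, ‖W k j‖ ^ 2 ≤ 1 := by
    have := (le_iff.mp hW).diag_nonneg (i := j)
    rw [Matrix.sub_apply, hdiag, one_apply_eq, sub_nonneg] at this
    exact_mod_cast this
  have hij : ‖W i j‖ ^ 2 ≤ ∑ k, ‖W k j‖ ^ 2 :=
    Finset.single_le_sum (f := fun k => ‖W k j‖ ^ 2) (fun _ _ => by positivity)
      (Finset.mem_univ i)
  nlinarith [norm_nonneg (W i j)]

lemma re_trace_conjTranspose_mul_le_l1Norm [Fintype κ] {W A : Matrix ι κ ℂ}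
    (hW : ∀ i j, ‖W i j‖ ≤ 1) : (Wᴴ * A).trace.re ≤ l1Norm A := by
  calc (Wᴴ * A).trace.re ≤ ‖(Wᴴ * A).trace‖ := Complex.re_le_norm _
    _ = ‖∑ i, ∑ j, star (W i j) * A i j‖ := by
      rw [trace, Finset.sum_comm]
      simp [mul_apply]
    _ ≤ ∑ i, ∑ j, ‖star (W i j) * A i j‖ :=
      (norm_sum_le _ _).trans (Finset.sum_le_sum fun i _ => norm_sum_le _ _)
    _ ≤ l1Norm A := Finset.sum_le_sum fun i _ => Finset.sum_le_sum fun j _ => by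
      rw [norm_mul, norm_star]
      exact mul_le_of_le_one_left (norm_nonneg _) (hW i j)

lemma Matrix.PosSemidef.sum_norm_diag_eq_re_trace {σ : Matrix ι ι ℂ} (hσ : σ.PosSemidef) :
    ∑ i, ‖σ i i‖ = σ.trace.re := by
  rw [trace, Complex.re_sum]
  exact Finset.sum_congr rfl fun i _ => by
    simpa using congrArg Complex.re (Complex.norm_of_nonneg' hσ.diag_nonneg)

end Entrywise

section TraceNorm

variable {ι : Type*} [Fintype ι] [DecidableEq ι]

lemma traceNorm_eq_re_trace_cfc_sqrt (A : Matrix ι ι ℂ) :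
    traceNorm A = (cfc Real.sqrt (Aᴴ * A)).trace.re := by
  rw [(posSemidef_conjTranspose_mul_self A).1.cfc_eq]
  rfl

lemma traceNorm_eq_sum_sqrt_eigenvalues (A : Matrix ι ι ℂ) :
    traceNorm A = ∑ k, √((posSemidef_conjTranspose_mul_self A).1.eigenvalues k) := by
  have hU := (posSemidef_conjTranspose_mul_self A).1.eigenvectorUnitary.2
  rw [traceNorm, trace_mul_cycle, mem_unitaryGroup_iff'.mp hU, Matrix.one_mul, trace_diagonal,
    Complex.re_sum]
  simp

lemma traceNorm_unitary_mul (A : Matrix ι ι ℂ) {X : Matrix ι ι ℂ}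
    (hX : X ∈ unitaryGroup ι ℂ) : traceNorm (X * A) = traceNorm A := by
  rw [traceNorm_eq_re_trace_cfc_sqrt, traceNorm_eq_re_trace_cfc_sqrt, conjTranspose_mul,
    Matrix.mul_assoc, ← Matrix.mul_assoc Xᴴ, ← star_eq_conjTranspose X,
    mem_unitaryGroup_iff'.mp hX, Matrix.one_mul]

lemma traceNorm_mul_unitary (A : Matrix ι ι ℂ) {X : Matrix ι ι ℂ}
    (hX : X ∈ unitaryGroup ι ℂ) : traceNorm (A * X) = traceNorm A := by
  have hgram : (A * X)ᴴ * (A * X) = Xᴴ * (Aᴴ * A * X) := by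
    simp only [conjTranspose_mul, Matrix.mul_assoc]
  have heig : (posSemidef_conjTranspose_mul_self (A * X)).1.eigenvalues
      = (posSemidef_conjTranspose_mul_self A).1.eigenvalues := by
    rw [IsHermitian.eigenvalues_eq_eigenvalues_iff, hgram, charpoly_mul_comm, Matrix.mul_assoc,
      ← star_eq_conjTranspose X, mem_unitaryGroup_iff.mp hX, Matrix.mul_one]
  rw [traceNorm_eq_sum_sqrt_eigenvalues, traceNorm_eq_sum_sqrt_eigenvalues, heig]

open MatrixOrder in
/-- Polar decomposition: `W := A (A†A)^{-1/2}`, where `(√0)⁻¹ = 0` takes care of the kernel. -/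
lemma exists_conjTranspose_mul_self_le_one_and_conjTranspose_mul_eq_cfc_sqrt
    (A : Matrix ι ι ℂ) :
    ∃ W : Matrix ι ι ℂ, Wᴴ * W ≤ 1 ∧ Wᴴ * A = cfc Real.sqrt (Aᴴ * A) := by
  have hcont (f : ℝ → ℝ) : ContinuousOn f (spectrum ℝ (Aᴴ * A)) :=
    finite_real_spectrum.continuousOn f
  -- discharges the `IsSelfAdjoint` side goals of the `cfc` lemmas below
  have hP : IsSelfAdjoint (Aᴴ * A) := (posSemidef_conjTranspose_mul_self A).1
  set g : ℝ → ℝ := fun x => (√x)⁻¹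
  have hg (x : ℝ) : g x * x = √x := by rw [inv_mul_eq_div, Real.div_sqrt]
  have hG : (cfc g (Aᴴ * A))ᴴ = cfc g (Aᴴ * A) :=
    (cfc_predicate g (Aᴴ * A) : IsSelfAdjoint _).star_eq
  have hGP : cfc g (Aᴴ * A) * (Aᴴ * A) = cfc Real.sqrt (Aᴴ * A) := by
    rw [← cfc_congr fun x _ => hg x, cfc_mul g (fun x => x) _ (hcont _) (hcont _),
      cfc_id' ℝ (Aᴴ * A)]
  refine ⟨A * cfc g (Aᴴ * A), ?_, ?_⟩
  · rw [conjTranspose_mul, hG, Matrix.mul_assoc, ← Matrix.mul_assoc Aᴴ, ← Matrix.mul_assoc, hGP,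
      ← cfc_mul _ _ _ (hcont _) (hcont _)]
    exact cfc_le_one _ _ fun x _ => mul_inv_le_one
  · rw [conjTranspose_mul, hG, Matrix.mul_assoc, hGP]

theorem traceNorm_le_l1Norm (A : Matrix ι ι ℂ) : traceNorm A ≤ l1Norm A := by
  obtain ⟨W, hW, hWA⟩ := exists_conjTranspose_mul_self_le_one_and_conjTranspose_mul_eq_cfc_sqrt A
  rw [traceNorm_eq_re_trace_cfc_sqrt, ← hWA]
  exact re_trace_conjTranspose_mul_le_l1Norm (norm_apply_le_one_of_conjTranspose_mul_self_le_one hW)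

lemma l1Norm_eq_l1Norm_sub_diagPart_add (σ : Matrix ι ι ℂ) :
    l1Norm σ = l1Norm (σ - diagPart σ) + ∑ i, ‖σ i i‖ := by
  have hentry (i j : ι) : ‖σ i j‖ = ‖(σ - diagPart σ) i j‖ + if i = j then ‖σ i i‖ else 0 := by
    by_cases h : i = j
    · subst h
      simp [diagPart]
    · simp [diagPart, h]
  rw [l1Norm, l1Norm, ← Finset.sum_add_distrib]
  refine Finset.sum_congr rfl fun i _ => ?_
  rw [Finset.sum_congr rfl fun j _ => hentry i j, Finset.sum_add_distrib, Finset.sum_ite_eq,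
    if_pos (Finset.mem_univ i)]

lemma trace_conjTranspose_mul_mul_of_mem_unitaryGroup (σ : Matrix ι ι ℂ) {X : Matrix ι ι ℂ}
    (hX : X ∈ unitaryGroup ι ℂ) : (Xᴴ * σ * X).trace = σ.trace := by
  rw [trace_mul_cycle, ← star_eq_conjTranspose, mem_unitaryGroup_iff.mp hX, Matrix.one_mul]

end TraceNorm

section PartialTranspose

variable {α β : Type*} [Fintype α] [Fintype β]

lemma ptranspose_kronecker_mul_mul_kronecker (A C : Matrix α α ℂ) (B D : Matrix β β ℂ)
    (ρ : Matrix (α × β) (α × β) ℂ) :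
    ptranspose ((A ⊗ₖ B) * ρ * (C ⊗ₖ D)) = (A ⊗ₖ Dᵀ) * ptranspose ρ * (C ⊗ₖ Bᵀ) := by
  ext ⟨i, k⟩ ⟨j, l⟩
  simp only [ptranspose, mul_apply, of_apply, kroneckerMap_apply, transpose_apply,
    Fintype.sum_prod_type, Finset.sum_mul]
  refine Finset.sum_congr rfl fun c _ => ?_
  rw [Finset.sum_comm]
  refine (Finset.sum_congr rfl fun a _ => Finset.sum_comm).trans ?_
  rw [Finset.sum_comm]
  exact Finset.sum_congr rfl fun b _ => Finset.sum_congr rfl fun a _ =>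
    Finset.sum_congr rfl fun d _ => by ring

lemma l1Norm_ptranspose (ρ : Matrix (α × β) (α × β) ℂ) :
    l1Norm (ptranspose ρ) = l1Norm ρ := by
  simp only [l1Norm, ptranspose, of_apply, Fintype.sum_prod_type]
  refine Finset.sum_congr rfl fun i _ => ?_
  rw [Finset.sum_comm]
  refine (Finset.sum_congr rfl fun j _ => Finset.sum_comm).trans ?_
  rw [Finset.sum_comm]

variable [DecidableEq α] [DecidableEq β]

lemma negativity_conjTranspose_kronecker_mul_mul_kronecker (ρ : Matrix (α × β) (α × β) ℂ)
    {U : Matrix α α ℂ} {V : Matrix β β ℂ} (hU : U ∈ unitaryGroup α ℂ)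
    (hV : V ∈ unitaryGroup β ℂ) :
    negativity ((U ⊗ₖ V)ᴴ * ρ * (U ⊗ₖ V)) = negativity ρ := by
  have hUV : Uᴴ ⊗ₖ Vᵀ ∈ unitaryGroup (α × β) ℂ :=
    kronecker_mem_unitary (Unitary.star_mem hU) (transpose_mem_unitaryGroup_iff.mpr hV)
  have hUV' : U ⊗ₖ Vᴴᵀ ∈ unitaryGroup (α × β) ℂ :=
    kronecker_mem_unitary hU (transpose_mem_unitaryGroup_iff.mpr (Unitary.star_mem hV))
  rw [negativity, negativity, conjTranspose_kronecker, ptranspose_kronecker_mul_mul_kronecker,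
    traceNorm_mul_unitary _ hUV', traceNorm_unitary_mul _ hUV]

lemma negativity_le_half_l1Norm_sub_diagPart {σ : Matrix (α × β) (α × β) ℂ}
    (hσ : σ.PosSemidef) (htr : σ.trace = 1) :
    negativity σ ≤ 1 / 2 * l1Norm (σ - diagPart σ) := by
  have h := traceNorm_le_l1Norm (ptranspose σ)
  rw [l1Norm_ptranspose, l1Norm_eq_l1Norm_sub_diagPart_add, hσ.sum_norm_diag_eq_re_trace, htr,
    Complex.one_re] at h
  rw [negativity]
  linarith

end PartialTranspose

/-- the conjecture of Khasin, Kosloff and Steinitz: the negativity of any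
bipartite state is bounded by half the entrywise l1-distance of `(U⊗V)†ρ(U⊗V)` from
its diagonal part, for all local unitaries `U, V`; in particular it is bounded by the
infimum over `U, V`. -/
theorem stmt_5 {m n : ℕ} (ρ : Matrix (Fin m × Fin n) (Fin m × Fin n) ℂ)
    (hpos : ρ.PosSemidef) (htr : ρ.trace = 1) :
    (∀ (U : Matrix.unitaryGroup (Fin m) ℂ) (V : Matrix.unitaryGroup (Fin n) ℂ),
      negativity ρ ≤ (1/2) * l1Norm (conjUV U V ρ - diagPart (conjUV U V ρ))) ∧
    negativity ρ ≤ ⨅ U : Matrix.unitaryGroup (Fin m) ℂ, ⨅ V : Matrix.unitaryGroup (Fin n) ℂ,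
      (1/2) * l1Norm (conjUV U V ρ - diagPart (conjUV U V ρ)) := by
  have hbound (U : unitaryGroup (Fin m) ℂ) (V : unitaryGroup (Fin n) ℂ) :
      negativity ρ ≤ (1/2) * l1Norm (conjUV U V ρ - diagPart (conjUV U V ρ)) := by
    have hUV := kronecker_mem_unitary U.2 V.2
    rw [← negativity_conjTranspose_kronecker_mul_mul_kronecker ρ U.2 V.2]
    exact negativity_le_half_l1Norm_sub_diagPart (hpos.conjTranspose_mul_mul_same _)
      (by rw [trace_conjTranspose_mul_mul_of_mem_unitaryGroup ρ hUV, htr])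
  exact ⟨hbound, le_ciInf fun U => le_ciInf fun V => hbound U V⟩
end

section
/- Let τ = Σ_{i,j} τ_{ij} (E_{ij} ⊗ E_{ij}) be a maximally correlated state on ℂ^n ⊗ ℂ^n and let σ = Σ_i τ_{ii} (E_{ii} ⊗ E_{ii}) be its diagonal part. Then for every state ξ on ℂ^n ⊗ ℂ^n whose partial transpose ξ^Γ is positive semidefinite (i.e., every PPT state, and in particular every separable state), ‖τ − σ‖_{l1} ≤ ‖τ − ξ‖_{l1}, where the entrywise l1-norm is taken in the computational product basis. Hence σ is a closest PPT (and closest separable) state to τ in this norm. -/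
open scoped Kronecker ComplexOrder
open Matrix

/-- The diagonal part `σ = Σ_i τ_{ii} (E_{ii} ⊗ E_{ii})` of a maximally correlated state. -/
noncomputable def mcsDiag {n : ℕ} (t : Fin n → Fin n → ℂ) :
    Matrix (Fin n × Fin n) (Fin n × Fin n) ℂ :=
  ∑ i, t i i • (matUnit i i ⊗ₖ matUnit i i)

/-
`mcs t - mcsDiag t` is supported on the entries `((i, i), (j, j))` with `i ≠ j`, where it equals
`t i j`. For a PPT state `ξ`, the entry `ξ (i, i) (j, j)` is the entry `((i, j), (j, i))` of the
positive semidefinite matrix `ξ^Γ`, so its modulus is at most the mean of the diagonal entries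
`ξ (i, j) (i, j)` and `ξ (j, i) (j, i)`. At those diagonal positions `mcs t` vanishes, and they
are disjoint from the correlated positions `((i, i), (j, j))`. Hence, by the triangle inequality,
`∑_{i ≠ j} |t i j| ≤ ∑_{i ≠ j} (|t i j - ξ (i, i) (j, j)| + |ξ (i, j) (i, j)|) ≤ ‖mcs t - ξ‖₁`.
-/

open Finset

namespace Matrix.PosSemidef

variable {ι 𝕜 : Type*} [RCLike 𝕜] {A : Matrix ι ι 𝕜}

theorem norm_apply_sq_le (hA : A.PosSemidef) (p q : ι) :
    ‖A p q‖ ^ 2 ≤ RCLike.re (A p p) * RCLike.re (A q q) := by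
  classical
  have hdet := (hA.submatrix ![p, q]).det_nonneg
  rw [det_fin_two] at hdet
  simp only [submatrix_apply, Matrix.cons_val_zero, Matrix.cons_val_one] at hdet
  rw [← hA.1.apply q p, RCLike.star_def, RCLike.mul_conj] at hdet
  have hp := (RCLike.nonneg_iff.mp (hA.diag_nonneg (i := p))).2
  have hq := (RCLike.nonneg_iff.mp (hA.diag_nonneg (i := q))).2
  have := (RCLike.nonneg_iff.mp hdet).1
  rw [map_sub, RCLike.mul_re, hp, hq, ← RCLike.ofReal_pow, RCLike.ofReal_re] at this
  linarith

theorem norm_apply_le (hA : A.PosSemidef) (p q : ι) :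
    ‖A p q‖ ≤ (RCLike.re (A p p) + RCLike.re (A q q)) / 2 := by
  have hp : 0 ≤ RCLike.re (A p p) := (RCLike.nonneg_iff.mp hA.diag_nonneg).1
  have hq : 0 ≤ RCLike.re (A q q) := (RCLike.nonneg_iff.mp hA.diag_nonneg).1
  nlinarith [hA.norm_apply_sq_le p q, norm_nonneg (A p q),
    sq_nonneg (RCLike.re (A p p) - RCLike.re (A q q))]

end Matrix.PosSemidef

theorem l1Norm_eq_sum {ι κ : Type*} [Fintype ι] [Fintype κ] (M : Matrix ι κ ℂ) :
    l1Norm M = ∑ y : ι × κ, ‖M y.1 y.2‖ :=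
  (Fintype.sum_prod_type' _).symm

section

variable {α : Type*} [Fintype α]

@[simps]
def corrIndex : α × α ↪ (α × α) × (α × α) where
  toFun x := ((x.1, x.1), (x.2, x.2))
  inj' x y h := by simp_all [Prod.ext_iff]

theorem sum_offDiag_le_l1Norm [DecidableEq α] (M : Matrix (α × α) (α × α) ℂ) :
    ∑ x ∈ univ.offDiag, (‖M (x.1, x.1) (x.2, x.2)‖ + ‖M x x‖) ≤ l1Norm M := by
  let diagIndex : α × α ↪ (α × α) × (α × α) :=
    ⟨fun x => (x, x), fun _ _ h => congrArg Prod.fst h⟩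
  have hdisj : Disjoint (univ.offDiag.map corrIndex) (univ.offDiag.map diagIndex) := by
    simp only [disjoint_left, mem_map, mem_offDiag]
    rintro _ ⟨x, -, rfl⟩ ⟨y, ⟨-, -, hy⟩, h⟩
    simp only [corrIndex, diagIndex, Prod.ext_iff] at h
    exact hy (h.1.1.trans h.1.2.symm)
  calc ∑ x ∈ univ.offDiag, (‖M (x.1, x.1) (x.2, x.2)‖ + ‖M x x‖)
      = ∑ y ∈ univ.offDiag.map corrIndex ∪ univ.offDiag.map diagIndex, ‖M y.1 y.2‖ := by
        rw [sum_union hdisj, sum_map, sum_map, sum_add_distrib]; rfl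
    _ ≤ ∑ y : (α × α) × (α × α), ‖M y.1 y.2‖ :=
        sum_le_univ_sum_of_nonneg fun _ => norm_nonneg _
    _ = l1Norm M := (l1Norm_eq_sum M).symm

theorem sum_offDiag_norm_le_of_posSemidef_ptranspose {ρ : Matrix (α × α) (α × α) ℂ}
    (hρ : (ptranspose ρ).PosSemidef) :
    ∑ x ∈ univ.offDiag, ‖ρ (x.1, x.1) (x.2, x.2)‖ ≤ ∑ x ∈ univ.offDiag, ‖ρ x x‖ := by
  have hswap : ∑ x ∈ univ.offDiag, ‖ρ x.swap x.swap‖ = ∑ x ∈ univ.offDiag, ‖ρ x x‖ :=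
    sum_equiv (Equiv.prodComm α α) (by simp [eq_comm]) (fun _ _ => rfl)
  calc ∑ x ∈ univ.offDiag, ‖ρ (x.1, x.1) (x.2, x.2)‖
      ≤ ∑ x ∈ univ.offDiag, (‖ρ x x‖ + ‖ρ x.swap x.swap‖) / 2 := by
        -- `ρ (i, i) (j, j)` is the entry of `ptranspose ρ` at `((i, j), (j, i))`
        refine sum_le_sum fun x _ => (hρ.norm_apply_le x x.swap).trans ?_
        gcongr <;> exact Complex.re_le_norm _
    _ = ∑ x ∈ univ.offDiag, ‖ρ x x‖ := by
        rw [← sum_div, sum_add_distrib, hswap, add_self_div_two]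

end

theorem matUnit_kronecker_matUnit {α : Type*} [DecidableEq α] (i j : α) :
    matUnit i j ⊗ₖ matUnit i j = single (i, i) (j, j) 1 := by
  rw [matUnit, single_kronecker_single, mul_one]

theorem mcs_apply {n : ℕ} (t : Fin n → Fin n → ℂ) (p q : Fin n × Fin n) :
    mcs t p q = if p.1 = p.2 ∧ q.1 = q.2 then t p.1 q.1 else 0 := by
  obtain ⟨a, b⟩ := p; obtain ⟨c, d⟩ := q
  simp only [mcs, Matrix.sum_apply, Matrix.smul_apply, matUnit_kronecker_matUnit, single_apply,
    Prod.mk.injEq, smul_eq_mul]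
  split_ifs with h
  · obtain ⟨rfl, rfl⟩ := h
    simp [ite_and, sum_ite_irrel]
  · refine Fintype.sum_eq_zero _ fun i => Fintype.sum_eq_zero _ fun j => ?_
    grind

theorem mcsDiag_apply {n : ℕ} (t : Fin n → Fin n → ℂ) (p q : Fin n × Fin n) :
    mcsDiag t p q = if p.1 = p.2 ∧ q.1 = q.2 ∧ p.1 = q.1 then t p.1 q.1 else 0 := by
  obtain ⟨a, b⟩ := p; obtain ⟨c, d⟩ := q
  simp only [mcsDiag, Matrix.sum_apply, Matrix.smul_apply, matUnit_kronecker_matUnit, single_apply,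
    Prod.mk.injEq, smul_eq_mul]
  split_ifs with h
  · obtain ⟨rfl, rfl, rfl⟩ := h
    simp
  · refine Fintype.sum_eq_zero _ fun i => ?_
    grind

theorem mcs_apply_diag_diag {n : ℕ} (t : Fin n → Fin n → ℂ) (i j : Fin n) :
    mcs t (i, i) (j, j) = t i j := by
  simp [mcs_apply]

theorem mcs_apply_self_of_ne {n : ℕ} (t : Fin n → Fin n → ℂ) {x : Fin n × Fin n}
    (hx : x.1 ≠ x.2) : mcs t x x = 0 := by
  simp [mcs_apply, hx]

theorem l1Norm_mcs_sub_mcsDiag {n : ℕ} (t : Fin n → Fin n → ℂ) :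
    l1Norm (mcs t - mcsDiag t) = ∑ x ∈ univ.offDiag, ‖t x.1 x.2‖ := by
  have hsupp : ∀ y ∉ univ.offDiag.map corrIndex, ‖(mcs t - mcsDiag t) y.1 y.2‖ = 0 := by
    rintro ⟨⟨a, b⟩, c, d⟩ hy
    rw [norm_eq_zero, Matrix.sub_apply, mcs_apply, mcsDiag_apply]
    by_cases hac : a = c
    · simp [hac]
    · have hne : ¬(a = b ∧ c = d) := fun ⟨hab, hcd⟩ =>
        hy (mem_map.2 ⟨(a, c), by simp [hac], by simp [hab, hcd]⟩)
      simp [hne, hac]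
  rw [l1Norm_eq_sum, ← sum_subset (subset_univ _) fun y _ hy => hsupp y hy, sum_map]
  refine sum_congr rfl fun x hx => ?_
  rw [mem_offDiag] at hx
  simp [mcs_apply_diag_diag, mcsDiag_apply, hx.2.2]

theorem stmt_6_general {n : ℕ} (t : Fin n → Fin n → ℂ) :
    ∀ ξ : Matrix (Fin n × Fin n) (Fin n × Fin n) ℂ,
      ξ.PosSemidef → ξ.trace = 1 → (ptranspose ξ).PosSemidef →
      l1Norm (mcs t - mcsDiag t) ≤ l1Norm (mcs t - ξ) := by
  intro ξ _ _ hppt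
  calc l1Norm (mcs t - mcsDiag t) = ∑ x ∈ univ.offDiag, ‖t x.1 x.2‖ := l1Norm_mcs_sub_mcsDiag t
    _ ≤ ∑ x ∈ univ.offDiag,
          (‖t x.1 x.2 - ξ (x.1, x.1) (x.2, x.2)‖ + ‖ξ (x.1, x.1) (x.2, x.2)‖) :=
        sum_le_sum fun x _ => norm_le_norm_sub_add _ _
    _ ≤ ∑ x ∈ univ.offDiag, (‖t x.1 x.2 - ξ (x.1, x.1) (x.2, x.2)‖ + ‖ξ x x‖) := by
        simp only [sum_add_distrib]
        exact add_le_add le_rfl (sum_offDiag_norm_le_of_posSemidef_ptranspose hppt)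
    _ = ∑ x ∈ univ.offDiag, (‖(mcs t - ξ) (x.1, x.1) (x.2, x.2)‖ + ‖(mcs t - ξ) x x‖) :=
        sum_congr rfl fun x hx => by
          rw [Matrix.sub_apply, Matrix.sub_apply, mcs_apply_diag_diag,
            mcs_apply_self_of_ne t (mem_offDiag.1 hx).2.2, zero_sub, norm_neg]
    _ ≤ l1Norm (mcs t - ξ) := sum_offDiag_le_l1Norm _

/-- the diagonal part of a maximally correlated state is a closest
PPT state (hence a closest separable state) in the entrywise l1-norm taken in the
computational product basis. -/
theorem stmt_6 {n : ℕ} (t : Fin n → Fin n → ℂ)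
    (hpos : (mcs t).PosSemidef) (htr : (mcs t).trace = 1) :
    ∀ ξ : Matrix (Fin n × Fin n) (Fin n × Fin n) ℂ,
      ξ.PosSemidef → ξ.trace = 1 → (ptranspose ξ).PosSemidef →
      l1Norm (mcs t - mcsDiag t) ≤ l1Norm (mcs t - ξ) :=
  stmt_6_general t
end
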